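/- Let (μ, P, H) be an admissible triple in ℝ³ with μ ≠ 0, and let d = diam(supp μ) be the diameter of its support. Then μ(ℝ³) ≤ d² · ∫ |H|² dμ. Equivalently, √(μ(ℝ³)/W(μ)) ≤ diam(supp μ), where W(μ) = ∫ |H|² dμ. -/

import Mathlib

open MeasureTheory Metric Filter
open scoped RealInnerProductSpace ENNReal

noncomputable section

/-- Euclidean three-space. -/
abbrev E3 : Type := EuclideanSpace ℝ (Fin 3)

/-- The support of a measure: points all of whose neighbourhoods have positive measure. -/
def mSupport (μ : Measure E3) : Set E3 := {x | ∀ r > 0, 0 < μ (ball x r)}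

/-- An admissible triple `(μ, P, H)`: a finite compactly supported Borel measure, a measurable
family of maps which μ-a.e. are orthogonal projections onto 2-dimensional planes (idempotent,
symmetric, of rank two), and an `L²(μ)` generalized mean curvature `H` satisfying the first
variation identity `∫ trace(P x ∘ DX x) dμ = -2 ∫ ⟨X x, H x⟩ dμ` for every compactly supported
`C¹` vector field `X`. -/
structure IsAdmissible (μ : Measure E3) (P : E3 → E3 →L[ℝ] E3) (H : E3 → E3) : Prop where
  finite : IsFiniteMeasure μ
  compact_support : IsCompact (mSupport μ)
  meas_P : ∀ v : E3, Measurable fun x => P x v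
  meas_H : AEStronglyMeasurable H μ
  proj_ae : ∀ᵐ x ∂μ, (P x).comp (P x) = P x ∧
      (∀ u v : E3, ⟪P x u, v⟫ = ⟪u, P x v⟫) ∧
      Module.finrank ℝ (LinearMap.range ((P x : E3 →ₗ[ℝ] E3))) = 2
  memL2 : MemLp H 2 μ
  first_variation : ∀ X : E3 → E3, ContDiff ℝ 1 X → HasCompactSupport X →
      ∫ x, LinearMap.trace ℝ E3 ((P x).comp (fderiv ℝ X x) : E3 →ₗ[ℝ] E3) ∂μ
        = -2 * ∫ x, ⟪X x, H x⟫ ∂μ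

/-- The generalized mean curvature is perpendicular: `(P x) (H x) = 0` for μ-a.e. `x`. -/
def IsPerp (μ : Measure E3) (P : E3 → E3 →L[ℝ] E3) (H : E3 → E3) : Prop :=
  ∀ᵐ x ∂μ, P x (H x) = 0

/-- The Willmore energy of an admissible triple. -/
def Willmore (μ : Measure E3) (H : E3 → E3) : ℝ := ∫ x, ‖H x‖ ^ 2 ∂μ

/-- The mass of a measure. -/
def Mass (μ : Measure E3) : ℝ := (μ Set.univ).toReal

/-!
Test the first variation identity with the position field `x - x₀`, cut off far away from the
support: its tangential divergence is `trace P = 2`, so `M = -∫ ⟪x - x₀, H⟫ dμ`. If `μ` lives in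
the closed ball of radius `r` about `x₀`, then `-⟪x - x₀, H⟫ ≤ r |H| ≤ (1 + r² |H|²) / 2`, whence
`M ≤ (M + r² W) / 2`, i.e. `M ≤ r² W`. Take `x₀` in the support and `r = diam (supp μ)`.
-/

open Topology LinearMap
open scoped ContDiff

theorem exists_contDiff_hasCompactSupport_eventuallyEq_sub {E : Type*} [NormedAddCommGroup E]
    [NormedSpace ℝ E] [FiniteDimensional ℝ E] [HasContDiffBump E] (x₀ : E) (r : ℝ) :
    ∃ X : E → E, ContDiff ℝ ∞ X ∧ HasCompactSupport X ∧
      ∀ x ∈ closedBall x₀ r, X =ᶠ[𝓝 x] fun y => y - x₀ := by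
  let φ : ContDiffBump x₀ := ⟨|r| + 1, |r| + 2, by positivity, by linarith⟩
  refine ⟨fun y => φ y • (y - x₀), φ.contDiff.smul (contDiff_id.sub contDiff_const),
    φ.hasCompactSupport.smul_right, fun x hx => ?_⟩
  have hx' : x ∈ ball x₀ φ.rIn :=
    mem_ball.2 ((mem_closedBall.1 hx).trans_lt (by simp only [φ]; linarith [le_abs_self r]))
  filter_upwards [φ.eventuallyEq_one_of_mem_ball hx'] with y hy
  simp [hy]

theorem mSupport_eq_support (μ : Measure E3) : mSupport μ = μ.support :=
  Set.ext fun _ => nhds_basis_ball.mem_measureSupport.symm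

theorem ae_mem_mSupport (μ : Measure E3) : ∀ᵐ x ∂μ, x ∈ mSupport μ :=
  mSupport_eq_support μ ▸ Measure.support_mem_ae

namespace IsAdmissible

variable {μ : Measure E3} {P : E3 → E3 →L[ℝ] E3} {H : E3 → E3}

theorem trace_eq_two_ae (hadm : IsAdmissible μ P H) :
    ∀ᵐ x ∂μ, trace ℝ E3 (P x : E3 →ₗ[ℝ] E3) = 2 := by
  filter_upwards [hadm.proj_ae] with x hx
  obtain ⟨hidem, -, hrank⟩ := hx
  rw [(ContinuousLinearMap.IsIdempotentElem.toLinearMap hidem).isProj_range.trace, hrank]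
  norm_num

theorem mass_eq_neg_integral_inner_sub (hadm : IsAdmissible μ P H) {x₀ : E3} {r : ℝ}
    (hr : ∀ᵐ x ∂μ, x ∈ closedBall x₀ r) : Mass μ = -∫ x, ⟪x - x₀, H x⟫ ∂μ := by
  obtain ⟨X, hX, hXc, hXeq⟩ := exists_contDiff_hasCompactSupport_eventuallyEq_sub x₀ r
  have htrace : ∀ᵐ x ∂μ, trace ℝ E3 ((P x).comp (fderiv ℝ X x) : E3 →ₗ[ℝ] E3) = 2 := by
    filter_upwards [hadm.trace_eq_two_ae, hr] with x htr hx
    rw [(hXeq x hx).fderiv_eq, fderiv_sub_const, fderiv_fun_id, ContinuousLinearMap.comp_id,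
      htr]
  have hinner : ∀ᵐ x ∂μ, ⟪X x, H x⟫ = ⟪x - x₀, H x⟫ := by
    filter_upwards [hr] with x hx
    rw [(hXeq x hx).eq_of_nhds]
  have hfv := hadm.first_variation X (hX.of_le (by exact_mod_cast le_top)) hXc
  rw [integral_congr_ae htrace, integral_congr_ae hinner, integral_const, smul_eq_mul,
    measureReal_def] at hfv
  rw [Mass]
  linarith

theorem integrable_inner_sub (hadm : IsAdmissible μ P H) {x₀ : E3} {r : ℝ}
    (hr : ∀ᵐ x ∂μ, x ∈ closedBall x₀ r) : Integrable (fun x => ⟪x - x₀, H x⟫) μ := by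
  have := hadm.finite
  refine ((hadm.memL2.integrable one_le_two).norm.const_mul r).mono'
    ((continuous_id.sub continuous_const).aestronglyMeasurable.inner hadm.meas_H) ?_
  filter_upwards [hr] with x hx
  calc ‖⟪x - x₀, H x⟫‖ ≤ ‖x - x₀‖ * ‖H x‖ := norm_inner_le_norm _ _
    _ ≤ r * ‖H x‖ := by gcongr; rwa [← dist_eq_norm, ← mem_closedBall]

theorem mass_le_sq_mul_willmore_of_ae_mem_closedBall (hadm : IsAdmissible μ P H) {x₀ : E3} {r : ℝ}
    (hr : ∀ᵐ x ∂μ, x ∈ closedBall x₀ r) : Mass μ ≤ r ^ 2 * Willmore μ H := by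
  have := hadm.finite
  have hHsq : Integrable (fun x => ‖H x‖ ^ 2) μ := hadm.memL2.norm.integrable_sq
  have hbound : ∀ᵐ x ∂μ, -⟪x - x₀, H x⟫ ≤ (1 + r ^ 2 * ‖H x‖ ^ 2) / 2 := by
    filter_upwards [hr] with x hx
    have hdist : ‖x - x₀‖ ≤ r := by rwa [← dist_eq_norm, ← mem_closedBall]
    have : -⟪x - x₀, H x⟫ ≤ r * ‖H x‖ :=
      (neg_le_abs _).trans ((abs_real_inner_le_norm _ _).trans (by gcongr))
    nlinarith [sq_nonneg (r * ‖H x‖ - 1)]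
  have : Mass μ ≤ (Mass μ + r ^ 2 * Willmore μ H) / 2 :=
    calc Mass μ = ∫ x, -⟪x - x₀, H x⟫ ∂μ := by
          rw [integral_neg, hadm.mass_eq_neg_integral_inner_sub hr]
      _ ≤ ∫ x, (1 + r ^ 2 * ‖H x‖ ^ 2) / 2 ∂μ :=
          integral_mono_ae (hadm.integrable_inner_sub hr).neg
            (((integrable_const 1).add (hHsq.const_mul _)).div_const 2) hbound
      _ = (Mass μ + r ^ 2 * Willmore μ H) / 2 := by
          rw [integral_div, integral_add (integrable_const 1) (hHsq.const_mul _),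
            integral_const, integral_const_mul, smul_eq_mul, mul_one, measureReal_def, Mass,
            Willmore]
  linarith

end IsAdmissible

theorem mass_le_diam_sq_mul_willmore_general (μ : Measure E3) (P : E3 → E3 →L[ℝ] E3) (H : E3 → E3)
    (hadm : IsAdmissible μ P H) :
    Mass μ ≤ (diam (mSupport μ)) ^ 2 * Willmore μ H := by
  have hae := ae_mem_mSupport μ
  obtain ⟨x₀, hx₀⟩ : ∃ x₀, ∀ᵐ x ∂μ, x ∈ closedBall x₀ (diam (mSupport μ)) := by
    rcases (mSupport μ).eq_empty_or_nonempty with hK | ⟨x₀, hx₀⟩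
    · exact ⟨0, hae.mono fun x hx => by simp [hK] at hx⟩
    · exact ⟨x₀, hae.mono fun x hx =>
        dist_le_diam_of_mem hadm.compact_support.isBounded hx hx₀⟩
  exact hadm.mass_le_sq_mul_willmore_of_ae_mem_closedBall hx₀

/-- the lower diameter bound in Simon's lemma: for a nonzero admissible triple,
`μ(ℝ³) ≤ (diam supp μ)² ∫ |H|² dμ`, i.e. `√(μ(ℝ³)/W(μ)) ≤ diam(supp μ)`. -/
theorem mass_le_diam_sq_mul_willmore (μ : Measure E3) (P : E3 → E3 →L[ℝ] E3) (H : E3 → E3)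
    (hadm : IsAdmissible μ P H) (hμ : μ ≠ 0) :
    Mass μ ≤ (diam (mSupport μ)) ^ 2 * Willmore μ H :=
  mass_le_diam_sq_mul_willmore_general μ P H hadm

end
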